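/- Let T be an antilinear operator on ℂ² with T² = -I. If P is a 2×2 complex matrix with P² = I and PT = TP (as maps on ℂ²), then P = I or P = -I. -/

import Mathlib

open Matrix Complex

/-!
Since `P² = 1` and `P ≠ ±1`, the fixed space of `P` is a line. It is `T`-invariant because `T`
commutes with `P` and the eigenvalue `1` is real, so a nonzero fixed vector `v` satisfies
`T v = t v`. Then `-v = T² v = |t|² v`, which is impossible.
-/

open Module Module.End

lemma exists_semilinearMap_coe_eq {V : Type*} [AddCommGroup V] [Module ℂ V] (T : V → V)
    (hT : ∀ (s t : ℂ) (x y : V),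
      T (s • x + t • y) = starRingEnd ℂ s • T x + starRingEnd ℂ t • T y) :
    ∃ T' : V →ₗ⋆[ℂ] V, ⇑T' = T := by
  have hT0 : T 0 = 0 := by simpa using hT 0 0 0 0
  exact ⟨{ toFun := T
           map_add' := fun x y => by simpa using hT 1 1 x y
           map_smul' := fun c x => by simpa [hT0] using hT c 0 x 0 }, rfl⟩

section Antilinear

variable {V : Type*} [AddCommGroup V] [Module ℂ V] (T : V →ₗ⋆[ℂ] V) (hT2 : ∀ x, T (T x) = -x)
include hT2

lemma eq_zero_of_antilinear_apply_eq_smul {v : V} {t : ℂ} (h : T v = t • v) : v = 0 := by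
  have hnorm : ((normSq t : ℂ) + 1) • v = 0 := by
    have := hT2 v
    rw [h, map_smulₛₗ, h, smul_smul, ← normSq_eq_conj_mul_self] at this
    rw [add_smul, one_smul, this, neg_add_cancel]
  refine (smul_eq_zero.mp hnorm).resolve_left ?_
  exact_mod_cast (by linarith [normSq_nonneg t] : normSq t + 1 ≠ 0)

lemma finrank_ne_one_of_antilinear_mapsTo (W : Submodule ℂ V) (hW : ∀ w ∈ W, T w ∈ W) :
    finrank ℂ W ≠ 1 := by
  intro h
  obtain ⟨v, hv, hspan⟩ := finrank_eq_one_iff'.mp h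
  obtain ⟨t, ht⟩ := hspan ⟨T v, hW v v.2⟩
  exact hv (Subtype.ext (eq_zero_of_antilinear_apply_eq_smul T hT2 (congrArg Subtype.val ht).symm))

end Antilinear

lemma antilinear_mem_eigenspace_of_commute {V : Type*} [AddCommGroup V] [Module ℂ V]
    (T : V →ₗ⋆[ℂ] V) (f : End ℂ V) (hcomm : ∀ x, f (T x) = T (f x)) (r : ℝ) {x : V}
    (hx : x ∈ eigenspace f (r : ℂ)) : T x ∈ eigenspace f (r : ℂ) := by
  rw [mem_eigenspace_iff] at hx ⊢
  rw [hcomm, hx, map_smulₛₗ, conj_ofReal]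

lemma finrank_eigenspace_one_of_mul_self_eq_one {K V : Type*} [Field K] [AddCommGroup V]
    [Module K V] (hV : finrank K V = 2) (f : End K V) (hf : f * f = 1) (hf₁ : f ≠ 1)
    (hf_neg : f ≠ -1) : finrank K (eigenspace f 1) = 1 := by
  have : FiniteDimensional K V := .of_finrank_pos (by omega)
  have hne_top : eigenspace f 1 ≠ ⊤ := by
    refine fun htop => hf₁ (LinearMap.ext fun x => ?_)
    simpa using mem_eigenspace_iff.mp (htop ▸ Submodule.mem_top : x ∈ eigenspace f 1)
  have hne_bot : eigenspace f 1 ≠ ⊥ := by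
    obtain ⟨x, hx⟩ : ∃ x, f x ≠ -x := by
      by_contra! h
      exact hf_neg (LinearMap.ext h)
    -- `f x + x` is fixed by `f` because `f² = 1`
    refine (Submodule.ne_bot_iff _).mpr ⟨f x + x, mem_eigenspace_iff.mpr ?_, ?_⟩
    · rw [map_add, ← Module.End.mul_apply, hf, Module.End.one_apply, one_smul, add_comm]
    · exact fun h => hx (eq_neg_of_add_eq_zero_left h)
  have hlt := Submodule.finrank_lt hne_top
  have hpos := Submodule.one_le_finrank_iff.mpr hne_bot
  omega

theorem stmt7 (T : (Fin 2 → ℂ) → (Fin 2 → ℂ))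
    (hT : ∀ (s t : ℂ) (x y : Fin 2 → ℂ),
      T (s • x + t • y) = (starRingEnd ℂ s) • T x + (starRingEnd ℂ t) • T y)
    (hT2 : ∀ x, T (T x) = -x)
    (P : Matrix (Fin 2) (Fin 2) ℂ) (hP : P * P = 1)
    (hcomm : ∀ x, P.mulVec (T x) = T (P.mulVec x)) :
    P = 1 ∨ P = -1 := by
  obtain ⟨T, rfl⟩ := exists_semilinearMap_coe_eq T hT
  by_contra! hPne
  set f := toLinAlgEquiv' P
  have hf : f * f = 1 := by rw [← map_mul, hP, map_one]
  have hf₁ : f ≠ 1 := fun h => hPne.1 (toLinAlgEquiv'.injective (h.trans (map_one _).symm))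
  have hf_neg : f ≠ -1 := fun h =>
    hPne.2 (toLinAlgEquiv'.injective (h.trans (by rw [map_neg, map_one])))
  have hfT : ∀ x, f (T x) = T (f x) := by simpa [f, toLinAlgEquiv'_apply] using hcomm
  refine finrank_ne_one_of_antilinear_mapsTo T hT2 (eigenspace f 1) (fun w hw => ?_)
    (finrank_eigenspace_one_of_mul_self_eq_one (by simp) f hf hf₁ hf_neg)
  simpa using antilinear_mem_eigenspace_of_commute T f hfT 1 (by simpa using hw)
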